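/- Let d ≥ 1 and let T be a finite rooted ordered tree in which every node has exactly d or 0 children. List the nodes of T in level order (breadth-first): the root first, then all nodes of depth 1 in left-to-right order, then all nodes of depth 2, and so on, where within each depth the children are grouped following the level order of their parents and kept in their original left-to-right order. If v is the (j+1)-th internal node in this level-order listing (j ≥ 0), then for every i with 1 ≤ i ≤ d, the i-th child of v occupies position j·d + 1 + i in the level-order listing (the root occupying position 1). Equivalently, the first child of the node at position x is at position d·(number of internal nodes among positions 1,…,x−1) + 2. -/

import Mathlib

/-- A finite rooted ordered tree: a single constructor taking the list of subtrees. -/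
inductive OTree where
  | node : List OTree → OTree

/-- The list of children (subtrees) of the root. -/
def childrenOf : OTree → List OTree
  | .node ts => ts

/-- Every node of the tree has exactly `d` or `0` children. -/
inductive Arity (d : ℕ) : OTree → Prop
  | mk (ts : List OTree) : (ts.length = d ∨ ts = []) →
      (∀ t ∈ ts, Arity d t) → Arity d (.node ts)

/-- The height of a tree: a leaf has height 0, and a node with children has
height one plus the maximum height of its subtrees. -/
def height : OTree → ℕ
  | .node ts => (ts.attach.map fun ⟨t, _⟩ => height t + 1).foldr max 0

/-- The list of the (subtrees rooted at the) nodes of depth `n` of `t`, in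
left-to-right order, children grouped following the order of their parents. -/
def levels (t : OTree) : ℕ → List OTree
  | 0 => [t]
  | n + 1 => ((levels t n).map childrenOf).flatten

/-- The level-order (breadth-first) listing of the nodes of `t`: the root first,
then all nodes of depth 1 in left-to-right order, then all nodes of depth 2, …. -/
def levelOrder (t : OTree) : List OTree :=
  ((List.range (height t + 1)).map (levels t)).flatten

/-- An internal node is a node with at least one child. -/
def isInternal : OTree → Bool
  | .node ts => !ts.isEmpty

lemma flatten_flatMap' {α β : Type*} (L : List (List α)) (f : α → List β) :
    L.flatten.flatMap f = (L.map (·.flatMap f)).flatten := by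
  induction L with
  | nil => simp
  | cons a L ih => simp [List.flatMap_append, ih]

lemma levels_flatMap (t : OTree) (n : ℕ) :
    levels t n.succ = (levels t n).flatMap childrenOf := by
  simp [levels, List.flatMap_def]

lemma levels_succ (t : OTree) (n : ℕ) :
    levels t (n + 1) = (childrenOf t).flatMap (fun c => levels c n) := by
  induction n generalizing t with
  | zero =>
    show levels t 1 = _
    rw [levels_flatMap]
    show [t].flatMap childrenOf = _
    simp [levels]
  | succ m ih =>
    show levels t (m + 1).succ = _
    rw [levels_flatMap, ih, List.flatMap_assoc]
    exact List.flatMap_congr fun c _ => (levels_flatMap c m).symm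

lemma le_foldr_max (l : List ℕ) (x : ℕ) (hx : x ∈ l) : x ≤ l.foldr max 0 := by
  induction l with
  | nil => simp at hx
  | cons a l ih =>
    simp only [List.foldr_cons]
    rcases List.mem_cons.1 hx with h | h
    · exact le_max_of_le_left h.le
    · exact le_max_of_le_right (ih h)

lemma height_child {t c : OTree} (hc : c ∈ childrenOf t) : height c + 1 ≤ height t := by
  cases t with
  | node ts =>
    simp only [height]
    exact le_foldr_max _ _ (List.mem_map.2 ⟨⟨c, hc⟩, List.mem_attach _ _, rfl⟩)

lemma levels_eq_nil {n : ℕ} : ∀ {t : OTree}, height t < n → levels t n = [] := by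
  induction n with
  | zero => intro t h; omega
  | succ m ih =>
    intro t h
    rw [levels_succ]
    apply List.flatMap_eq_nil_iff.2
    intro c hc
    exact ih (by have := height_child hc; omega)

lemma arity_levels {d : ℕ} {t : OTree} (h : Arity d t) (n : ℕ) :
    ∀ u ∈ levels t n, Arity d u := by
  induction n with
  | zero => intro u hu; simp [levels] at hu; rwa [hu]
  | succ m ih =>
    intro u hu
    rw [levels_flatMap] at hu
    obtain ⟨w, hw, hu⟩ := List.mem_flatMap.1 hu
    have := ih w hw
    cases this with
    | mk ts _ h2 => exact h2 u hu

lemma flatMap_levelOrder (T : OTree) :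
    (levelOrder T).flatMap childrenOf = (levelOrder T).drop 1 := by
  have key : ∀ n, ((List.range n).map (levels T)).flatten.flatMap childrenOf
      = ((List.range n).map (fun k => levels T (k + 1))).flatten := by
    intro n
    rw [flatten_flatMap']
    congr 1
    rw [List.map_map]
    exact List.map_congr_left fun k _ => (levels_flatMap T k).symm
  show (levelOrder T).flatMap childrenOf = (levelOrder T).drop 1
  unfold levelOrder
  rw [key]
  conv_lhs => rw [List.range_succ]
  conv_rhs => rw [List.range_succ_eq_map (n := height T)]
  simp only [List.map_append, List.map_cons, List.flatten_append, List.flatten_cons,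
    List.map_map]
  rw [levels_eq_nil (by omega : height T < height T + 1)]
  have h0 : levels T 0 = [T] := rfl
  rw [h0]
  simp [Function.comp_def, Nat.succ_eq_add_one]

lemma children_len {d : ℕ} {u : OTree} (h : Arity d u) :
    (childrenOf u).length = d ∨ childrenOf u = [] := by
  cases h with
  | mk ts h1 _ => exact h1

lemma core {d : ℕ} : ∀ (L : List OTree),
    (∀ u ∈ L, (childrenOf u).length = d ∨ childrenOf u = []) →
    ∀ (j : ℕ) (v : OTree), (L.filter isInternal)[j]? = some v →
    ∀ r, r < d → (L.flatMap childrenOf)[j * d + r]? = (childrenOf v)[r]? := by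
  intro L
  induction L with
  | nil => intro _ j v hv; simp at hv
  | cons a L ih =>
    intro hall j v hv r hr
    have ha := hall a List.mem_cons_self
    have hL := fun u hu => hall u (List.mem_cons_of_mem a hu)
    rw [List.flatMap_cons]
    by_cases hint : isInternal a = true
    · have hlen : (childrenOf a).length = d := by
        rcases ha with h | h
        · exact h
        · exfalso; cases a with
          | node ts =>
            simp [childrenOf] at h
            simp [isInternal, h] at hint
      rw [List.filter_cons_of_pos hint] at hv
      cases j with
      | zero =>
        simp at hv
        subst hv
        simpa using List.getElem?_append_left (by omega : r < (childrenOf a).length)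
      | succ j' =>
        rw [List.getElem?_cons_succ] at hv
        rw [List.getElem?_append_right (by rw [hlen]; nlinarith : (childrenOf a).length ≤ (j' + 1) * d + r)]
        rw [hlen]
        have : (j' + 1) * d + r - d = j' * d + r := by ring_nf; omega
        rw [this]
        exact ih hL j' v hv r hr
    · have hnil : childrenOf a = [] := by
        rcases ha with h | h
        · cases a with
          | node ts =>
            simp [isInternal] at hint
            simp [childrenOf] at h ⊢
            exact hint
        · exact h
      rw [List.filter_cons_of_neg (by simp [hint])] at hv
      rw [hnil, List.nil_append]
      exact ih hL j v hv r hr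

/-- let `d ≥ 1` and let every node of `T` have exactly `d` or `0`
children. In the level-order listing (1-based positions), if `v` is the
`(j+1)`-th internal node (`j ≥ 0`), then for `1 ≤ i ≤ d` the `i`-th child of `v`
occupies position `j·d + 1 + i`. Equivalently, the first child of the node at
position `x` is at position `d·(number of internal nodes among positions 1,…,x−1) + 2`. -/
theorem stmt15 (d : ℕ) (hd : 1 ≤ d) (T : OTree) (har : Arity d T) :
    (∀ (j : ℕ) (v : OTree), ((levelOrder T).filter isInternal)[j]? = some v →
      ∀ i, 1 ≤ i → i ≤ d →
        (levelOrder T)[(j * d + 1 + i) - 1]? = (childrenOf v)[i - 1]?) ∧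
    (∀ (x : ℕ) (v : OTree), 1 ≤ x → (levelOrder T)[x - 1]? = some v →
      isInternal v = true →
      (levelOrder T)[(d * (((levelOrder T).take (x - 1)).filter isInternal).length + 2) - 1]? =
        (childrenOf v)[0]?) := by
  set L := levelOrder T with hL
  have hall : ∀ u ∈ L, (childrenOf u).length = d ∨ childrenOf u = [] := by
    intro u hu
    rw [hL] at hu
    unfold levelOrder at hu
    obtain ⟨l, hl, hul⟩ := List.mem_flatten.1 hu
    obtain ⟨n, _, rfl⟩ := List.mem_map.1 hl
    exact children_len (arity_levels har n u hul)
  have hdrop : L.flatMap childrenOf = L.drop 1 := flatMap_levelOrder T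
  have part1 : ∀ (j : ℕ) (v : OTree), (L.filter isInternal)[j]? = some v →
      ∀ i, 1 ≤ i → i ≤ d → L[(j * d + 1 + i) - 1]? = (childrenOf v)[i - 1]? := by
    intro j v hv i hi1 hid
    have := core L hall j v hv (i - 1) (by omega)
    rw [hdrop] at this
    rw [List.getElem?_drop] at this
    have heq : j * d + 1 + i - 1 = 1 + (j * d + (i - 1)) := by omega
    rw [heq]
    exact this
  refine ⟨part1, ?_⟩
  intro x v hx hxv hvint
  set j := ((L.take (x - 1)).filter isInternal).length with hj
  have hjv : (L.filter isInternal)[j]? = some v := by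
    have hsplit : L = L.take (x - 1) ++ L.drop (x - 1) := (List.take_append_drop _ _).symm
    have hdropv : (L.drop (x - 1))[0]? = some v := by
      rw [List.getElem?_drop]; simpa using hxv
    rw [hsplit]
    rw [List.filter_append]
    rw [List.getElem?_append_right (le_of_eq hj.symm)]
    rw [hj, Nat.sub_self]
    cases hdv : L.drop (x - 1) with
    | nil => rw [hdv] at hdropv; simp at hdropv
    | cons w rest =>
      rw [hdv] at hdropv
      simp at hdropv
      subst hdropv
      rw [List.filter_cons_of_pos hvint]
      simp
  have := part1 j v hjv 1 le_rfl hd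
  have heq : d * j + 2 - 1 = j * d + 1 + 1 - 1 := by ring_nf
  rw [heq]
  simpa using this
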